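/- arXiv:2507.02553 — 2 statements merged into one kernel-verified Lean document; each statement's English description precedes it below -/
import Mathlib

section
/- For every λ ∈ ℂ*, α, β, γ ∈ ℂ, h(t) ∈ ℂ[t] and every nonzero element v ∈ Φ(λ,α,β,γ,h(t)), there exists a positive integer m such that L_m·v ≠ 0. In particular, Φ(λ,α,β,γ,h(t)) is not a restricted 𝔏-module (a module on which, for each vector w, L_m·w = 0 for all sufficiently large m). -/
noncomputable section

/-- The polynomial ring `ℂ[s,t]`; variable `0` is `s`, variable `1` is `t`. -/
abbrev P2 : Type := MvPolynomial (Fin 2) ℂ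

/-- The shift operator `f(s,t) ↦ f(s-m,t)` on `ℂ[s,t]`. -/
def shiftS (m : ℤ) : Module.End ℂ P2 :=
  (MvPolynomial.aeval ![MvPolynomial.X 0 - MvPolynomial.C (m : ℂ), MvPolynomial.X 1] :
    P2 →ₐ[ℂ] P2).toLinearMap

/-- Multiplication by a polynomial, as a linear endomorphism of `ℂ[s,t]`. -/
def mulOp (p : P2) : Module.End ℂ P2 := LinearMap.mulLeft ℂ p

/-- The partial derivative `∂/∂t` on `ℂ[s,t]`. -/
def dT : Module.End ℂ P2 := (MvPolynomial.pderiv (1 : Fin 2)).toLinearMap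

/-- The embedding `ℂ[t] → ℂ[s,t]`, `t ↦` variable `1`. -/
def toT (p : Polynomial ℂ) : P2 := Polynomial.aeval (MvPolynomial.X 1 : P2) p

/-- The polynomial quotient `(h(t) - h(α)) / (t - α)`. -/
def hq (al : ℂ) (h : Polynomial ℂ) : Polynomial ℂ :=
  Polynomial.divByMonic (h - Polynomial.C (Polynomial.eval al h))
    (Polynomial.X - Polynomial.C al)

/-- `h_m(t) = m h(t) - m (m-1) α (h(t) - h(α))/(t - α)`. -/
def hmPoly (al : ℂ) (h : Polynomial ℂ) (m : ℤ) : Polynomial ℂ :=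
  (m : ℂ) • h - ((m : ℂ) * ((m : ℂ) - 1) * al) • hq al h

/-- The action of `L_m` on `Φ(λ,α,β,γ,h)`:
`L_m · f = λ^m (s + h_m(t)) f(s-m,t) - m λ^m (t - mα) ∂_t(f(s-m,t))`. -/
def opL (lam al : ℂ) (h : Polynomial ℂ) (m : ℤ) : Module.End ℂ P2 :=
  lam ^ m • (mulOp (MvPolynomial.X 0 + toT (hmPoly al h m)) * shiftS m)
    - ((m : ℂ) * lam ^ m) •
        (mulOp (MvPolynomial.X 1 - MvPolynomial.C ((m : ℂ) * al)) * (dT * shiftS m))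

/-- The action of `M_m` on `Φ(λ,α,β,γ,h)`: `M_m · f = λ^m (t - mα) f(s-m,t)`. -/
def opM (lam al : ℂ) (m : ℤ) : Module.End ℂ P2 :=
  lam ^ m • (mulOp (MvPolynomial.X 1 - MvPolynomial.C ((m : ℂ) * al)) * shiftS m)

/-- The action of `S_m` on `Φ(λ,α,β,γ,h)`: `S_m · f = λ^m β f(s-m,t)`. -/
def opS (lam be : ℂ) (m : ℤ) : Module.End ℂ P2 :=
  (lam ^ m * be) • shiftS m

/-- The action of `I_m` on `Φ(λ,α,β,γ,h)`:
`I_m · f = λ^m (γ - m β (h(t)-h(α))/(t-α)) f(s-m,t) + m λ^m β ∂_t(f(s-m,t))`. -/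
def opI (lam al be ga : ℂ) (h : Polynomial ℂ) (m : ℤ) : Module.End ℂ P2 :=
  lam ^ m •
      (mulOp (MvPolynomial.C ga - MvPolynomial.C ((m : ℂ) * be) * toT (hq al h)) * shiftS m)
    + ((m : ℂ) * lam ^ m * be) • (dT * shiftS m)

/- ### Auxiliary lemmas -/

lemma shiftS_apply (m : ℤ) (f : P2) : shiftS m f =
    MvPolynomial.aeval ![MvPolynomial.X 0 - MvPolynomial.C (m : ℂ), MvPolynomial.X 1] f := rfl

lemma dT_apply (f : P2) : dT f = MvPolynomial.pderiv 1 f := rfl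

lemma aeval_eq_eval' (p : Fin 2 → ℂ) (f : P2) :
    MvPolynomial.aeval p f = MvPolynomial.eval p f := rfl

lemma shiftS_mul (m : ℤ) (a b : P2) : shiftS m (a * b) = shiftS m a * shiftS m b := by
  simp only [shiftS_apply, map_mul]

lemma dT_shiftS_apply (m : ℤ) (f : P2) : dT (shiftS m f) = shiftS m (dT f) := by
  induction f using MvPolynomial.induction_on with
  | C a => simp [dT_apply, shiftS_apply, MvPolynomial.pderiv_C]
  | add f g hf hg => simp only [map_add, hf, hg]
  | mul_X f i hf =>
      have hXi : MvPolynomial.pderiv (1:Fin 2) (shiftS m (MvPolynomial.X i))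
          = shiftS m (MvPolynomial.pderiv 1 (MvPolynomial.X i)) := by
        fin_cases i <;> simp [shiftS_apply, MvPolynomial.pderiv_X]
      calc dT (shiftS m (f * MvPolynomial.X i))
          = MvPolynomial.pderiv 1 (shiftS m f) * shiftS m (MvPolynomial.X i)
            + shiftS m f * MvPolynomial.pderiv 1 (shiftS m (MvPolynomial.X i)) := by
            rw [shiftS_mul, dT_apply, MvPolynomial.pderiv_mul]
        _ = shiftS m (MvPolynomial.pderiv 1 f) * shiftS m (MvPolynomial.X i)
            + shiftS m f * shiftS m (MvPolynomial.pderiv 1 (MvPolynomial.X i)) := by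
            rw [← dT_apply, hf, hXi, dT_apply]
        _ = shiftS m (dT (f * MvPolynomial.X i)) := by
            rw [dT_apply, MvPolynomial.pderiv_mul, map_add, shiftS_mul, shiftS_mul]

lemma eval_shiftS (p : Fin 2 → ℂ) (m : ℤ) (f : P2) :
    MvPolynomial.eval p (shiftS m f) = MvPolynomial.eval ![p 0 - m, p 1] f := by
  rw [shiftS_apply, ← aeval_eq_eval', ← aeval_eq_eval', MvPolynomial.comp_aeval_apply]
  have hg : (fun i => (MvPolynomial.aeval p)
      (![MvPolynomial.X 0 - MvPolynomial.C (m:ℂ), MvPolynomial.X 1] i))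
      = (![p 0 - m, p 1] : Fin 2 → ℂ) := by
    funext i; fin_cases i <;> simp
  rw [hg]

/-- `f(s₀ - X, t₀)` as a polynomial in one variable `X`. -/
def Psub (p : Fin 2 → ℂ) (f : P2) : Polynomial ℂ :=
  MvPolynomial.aeval ![Polynomial.C (p 0) - Polynomial.X, Polynomial.C (p 1)] f

lemma eval_Psub (p : Fin 2 → ℂ) (f : P2) (x : ℂ) :
    Polynomial.eval x (Psub p f) = MvPolynomial.eval ![p 0 - x, p 1] f := by
  rw [← Polynomial.coe_aeval_eq_eval]
  show (Polynomial.aeval x) _ = _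
  rw [Psub, MvPolynomial.comp_aeval_apply, ← aeval_eq_eval']
  have hg : (fun i => (Polynomial.aeval x)
      (![Polynomial.C (p 0) - Polynomial.X, Polynomial.C (p 1)] i))
      = (![p 0 - x, p 1] : Fin 2 → ℂ) := by
    funext i; fin_cases i <;> simp
  rw [hg]

lemma eval_toT (p : Fin 2 → ℂ) (q : Polynomial ℂ) :
    MvPolynomial.eval p (toT q) = Polynomial.eval (p 1) q := by
  have h1 : MvPolynomial.eval p (toT q)
      = Polynomial.aeval ((MvPolynomial.aeval p) (MvPolynomial.X 1 : P2)) q := by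
    rw [← aeval_eq_eval', toT]
    exact (Polynomial.aeval_algHom_apply (MvPolynomial.aeval p) _ q).symm
  rw [h1, MvPolynomial.aeval_X, Polynomial.coe_aeval_eq_eval]

lemma key (lam : ℂ) (hlam : lam ≠ 0) (al : ℂ) (h : Polynomial ℂ) (v : P2) (N : ℤ)
    (hz : ∀ m : ℤ, N ≤ m → opL lam al h m v = 0) : v = 0 := by
  have main : ∀ p : Fin 2 → ℂ, p 0 * MvPolynomial.eval p v = 0 := by
    intro p
    set Hv := (hq al h).eval (p 1) with hHv
    set Q : Polynomial ℂ :=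
      (Polynomial.C (p 0) + Polynomial.C (h.eval (p 1)) * Polynomial.X
        - Polynomial.C (al * Hv) * (Polynomial.X * (Polynomial.X - 1))) * Psub p v
      - (Polynomial.X * (Polynomial.C (p 1) - Polynomial.C al * Polynomial.X))
        * Psub p (MvPolynomial.pderiv 1 v) with hQdef
    have hroot : ∀ m : ℤ, N ≤ m → Polynomial.eval (m:ℂ) Q = 0 := by
      intro m hm
      have h0 : MvPolynomial.eval p (opL lam al h m v) = 0 := by rw [hz m hm]; simp
      have happ : opL lam al h m v
          = lam ^ m • ((MvPolynomial.X 0 + toT (hmPoly al h m)) * shiftS m v)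
            - ((m : ℂ) * lam ^ m) • ((MvPolynomial.X 1 - MvPolynomial.C ((m:ℂ) * al))
              * dT (shiftS m v)) := rfl
      have hHm : Polynomial.eval (p 1) (hmPoly al h m)
          = (m:ℂ) * h.eval (p 1) - (m:ℂ)*((m:ℂ)-1)*al*Hv := by
        simp [hmPoly, hHv, smul_eq_mul]
      rw [happ, map_sub, MvPolynomial.smul_eval, MvPolynomial.smul_eval, map_mul, map_mul,
        map_add, map_sub, MvPolynomial.eval_X, MvPolynomial.eval_X, MvPolynomial.eval_C,
        eval_toT, hHm, dT_shiftS_apply, dT_apply, eval_shiftS, eval_shiftS,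
        ← eval_Psub, ← eval_Psub] at h0
      have hl : lam ^ m ≠ 0 := zpow_ne_zero m hlam
      have h1 : lam ^ m *
          ((p 0 + ((m:ℂ) * h.eval (p 1) - (m:ℂ)*((m:ℂ)-1)*al*Hv))
              * Polynomial.eval (m:ℂ) (Psub p v)
            - (m:ℂ) * ((p 1 - (m:ℂ)*al)
              * Polynomial.eval (m:ℂ) (Psub p (MvPolynomial.pderiv 1 v)))) = 0 := by
        linear_combination h0
      have hfac := (mul_eq_zero.mp h1).resolve_left hl
      rw [hQdef]
      simp only [Polynomial.eval_sub, Polynomial.eval_mul, Polynomial.eval_add,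
        Polynomial.eval_C, Polynomial.eval_X, Polynomial.eval_one]
      linear_combination hfac
    have hQ0 : Q = 0 := by
      have hsub : ((fun m : ℤ => (m : ℂ)) '' Set.Ici N) ⊆ {x | Q.IsRoot x} := by
        rintro x ⟨m, hm, rfl⟩
        exact hroot m hm
      have hinf : ((fun m : ℤ => (m : ℂ)) '' Set.Ici N).Infinite :=
        (Set.Ici_infinite N).image (fun a _ b _ hab => by exact_mod_cast hab)
      exact Polynomial.eq_zero_of_infinite_isRoot Q (hinf.mono hsub)
    have hev0 := congrArg (Polynomial.eval (0:ℂ)) hQ0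
    rw [hQdef] at hev0
    have hp2 : (![p 0 - 0, p 1] : Fin 2 → ℂ) = p := by
      funext i; fin_cases i <;> simp
    simp only [Polynomial.eval_sub, Polynomial.eval_mul, Polynomial.eval_add,
      Polynomial.eval_C, Polynomial.eval_X, Polynomial.eval_zero, eval_Psub, hp2] at hev0
    linear_combination hev0
  have hXv : (MvPolynomial.X 0 : P2) * v = 0 := by
    apply MvPolynomial.funext
    intro x
    simpa using main x
  exact (mul_eq_zero.mp hXv).resolve_left (MvPolynomial.X_ne_zero 0)

/-- For every `λ ∈ ℂ*`, `α, β, γ ∈ ℂ`, `h(t) ∈ ℂ[t]` and every nonzero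
`v ∈ Φ(λ,α,β,γ,h(t))`, there is a positive integer `m` with `L_m·v ≠ 0`. In particular,
`Φ(λ,α,β,γ,h(t))` is not a restricted `𝔏`-module (one where, for each vector `w`,
`L_m·w = 0` for all sufficiently large `m`). -/
theorem stmt16 (lam : ℂ) (hlam : lam ≠ 0) (al be ga : ℂ) (h : Polynomial ℂ) :
    (∀ v : P2, v ≠ 0 → ∃ m : ℤ, 0 < m ∧ opL lam al h m v ≠ 0) ∧
    ¬ (∀ w : P2, ∃ N : ℤ, ∀ m : ℤ, N ≤ m → opL lam al h m w = 0) := by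
  constructor
  · intro v hv
    by_contra hc
    push_neg at hc
    exact hv (key lam hlam al h v 1 (fun m hm => hc m (by omega)))
  · intro hw
    obtain ⟨N, hN⟩ := hw 1
    exact one_ne_zero (key lam hlam al h 1 N hN)

end
end

section
/- Let λ, λ′ ∈ ℂ*, α, α′, β, β′, γ, γ′ ∈ ℂ, h(t), q(t) ∈ ℂ[t], and let φ : Φ(λ,α,β,γ,h(t)) → Φ(λ′,α′,β′,γ′,q(t)) be a homomorphism of 𝔏-modules. Then φ(f(s,t)) = f(s,t)·φ(1) for every f(s,t) ∈ ℂ[s,t]; moreover, if φ is an isomorphism, then φ(1) is a nonzero constant, so φ is multiplication by a nonzero scalar. -/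
noncomputable section

lemma shiftS_zero (f : P2) : shiftS 0 f = f := by
  have : ![MvPolynomial.X 0 - MvPolynomial.C ((0:ℤ) : ℂ), MvPolynomial.X 1]
      = (MvPolynomial.X : Fin 2 → P2) := by
    funext i
    fin_cases i <;> simp
  simp only [shiftS, AlgHom.toLinearMap_apply, this, MvPolynomial.aeval_X_left_apply]

lemma hmPoly_zero (al : ℂ) (h : Polynomial ℂ) : hmPoly al h 0 = 0 := by
  simp [hmPoly]

lemma mv_units_eq_C {n : ℕ} (p : MvPolynomial (Fin n) ℂ) (hp : IsUnit p) :
    ∃ c : ℂ, p = MvPolynomial.C c := by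
  induction n with
  | zero => obtain ⟨c, rfl⟩ := MvPolynomial.C_surjective (Fin 0) p; exact ⟨c, rfl⟩
  | succ n ih =>
    set e := MvPolynomial.finSuccEquiv ℂ n
    have hu : IsUnit (e p) := hp.map e
    have hd : (e p).natDegree = 0 := Polynomial.natDegree_eq_zero_of_isUnit hu
    have he : e p = Polynomial.C ((e p).coeff 0) := Polynomial.eq_C_of_natDegree_eq_zero hd
    have hu2 : IsUnit ((e p).coeff 0) := by
      rw [he, Polynomial.isUnit_C] at hu; exact hu
    obtain ⟨c, hc⟩ := ih _ hu2
    refine ⟨c, ?_⟩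
    apply e.injective
    rw [he, hc]
    show Polynomial.C (MvPolynomial.C c) = e (MvPolynomial.C c)
    simp [e, MvPolynomial.finSuccEquiv_apply]

/-- Let `φ : Φ(λ,α,β,γ,h(t)) → Φ(λ',α',β',γ',q(t))` be a homomorphism of
`𝔏`-modules (a `ℂ`-linear map intertwining the actions of all basis elements of `𝔏`). Then
`φ(f(s,t)) = f(s,t)·φ(1)` for every `f(s,t) ∈ ℂ[s,t]`; moreover, if `φ` is an isomorphism,
then `φ(1)` is a nonzero constant, i.e. `φ` is multiplication by a nonzero scalar. -/
theorem stmt17 (lam lam' : ℂ) (hlam : lam ≠ 0) (hlam' : lam' ≠ 0)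
    (al al' be be' ga ga' : ℂ) (h q : Polynomial ℂ)
    (φ : P2 →ₗ[ℂ] P2)
    (hφL : ∀ (m : ℤ) (f : P2), φ (opL lam al h m f) = opL lam' al' q m (φ f))
    (hφM : ∀ (m : ℤ) (f : P2), φ (opM lam al m f) = opM lam' al' m (φ f))
    (hφS : ∀ (m : ℤ) (f : P2), φ (opS lam be m f) = opS lam' be' m (φ f))
    (hφI : ∀ (m : ℤ) (f : P2), φ (opI lam al be ga h m f) = opI lam' al' be' ga' q m (φ f)) :
    (∀ f : P2, φ f = f * φ 1) ∧
    (Function.Bijective φ → ∃ c : ℂ, c ≠ 0 ∧ ∀ f : P2, φ f = c • f) := by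
  have hs : ∀ f : P2, φ (MvPolynomial.X 0 * f) = MvPolynomial.X 0 * φ f := by
    intro f
    have := hφL 0 f
    simp only [opL, hmPoly_zero, shiftS_zero, toT, map_zero, add_zero, Int.cast_zero,
      zero_mul, zero_smul, sub_zero, zpow_zero, one_smul, Module.End.mul_apply,
      LinearMap.id_coe, id_eq, LinearMap.smul_apply, mulOp, LinearMap.mulLeft_apply] at this
    simpa using this
  have ht : ∀ f : P2, φ (MvPolynomial.X 1 * f) = MvPolynomial.X 1 * φ f := by
    intro f
    have := hφM 0 f
    simp only [opM, shiftS_zero, Int.cast_zero, zero_mul, map_zero, sub_zero, zpow_zero,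
      one_smul, Module.End.mul_apply, LinearMap.id_coe, id_eq, LinearMap.smul_apply,
      mulOp, LinearMap.mulLeft_apply] at this
    simpa using this
  have hmain : ∀ f : P2, φ f = f * φ 1 := by
    intro f
    induction f using MvPolynomial.induction_on with
    | C a =>
      have : (MvPolynomial.C a : P2) = a • 1 := by
        rw [MvPolynomial.smul_eq_C_mul, mul_one]
      rw [this, map_smul, MvPolynomial.smul_eq_C_mul, smul_mul_assoc,
        MvPolynomial.smul_eq_C_mul, one_mul]
    | add f g hf hg => rw [map_add, hf, hg, add_mul]
    | mul_X f i hf =>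
      fin_cases i
      · show φ (f * MvPolynomial.X 0) = f * MvPolynomial.X 0 * φ 1
        rw [mul_comm f (MvPolynomial.X 0), hs, hf]; ring
      · show φ (f * MvPolynomial.X 1) = f * MvPolynomial.X 1 * φ 1
        rw [mul_comm f (MvPolynomial.X 1), ht, hf]; ring
  refine ⟨hmain, fun hbij => ?_⟩
  obtain ⟨g, hg⟩ := hbij.2 1
  have hunit : IsUnit (φ 1) := by
    refine IsUnit.of_mul_eq_one g ?_
    rw [mul_comm, ← hmain g, hg]
  obtain ⟨c, hc⟩ := mv_units_eq_C (φ 1) hunit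
  refine ⟨c, ?_, fun f => ?_⟩
  · rintro rfl
    simp only [map_zero] at hc
    have : φ (1 : P2) ≠ 0 := by
      intro h0
      have := hbij.1 (a₁ := (1:P2)) (a₂ := 0) (by simp [h0])
      simp at this
    exact this hc
  · rw [hmain f, hc, MvPolynomial.smul_eq_C_mul, mul_comm]


end
end
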